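/- arXiv:1209.0604 — 3 statements merged into one kernel-verified Lean document; each statement's English description precedes it below -/
import Mathlib

section
/- For integers r >= 1 and m >= r+1, sum_{n=1}^infty h_n^(r)/n^m = sum_{n=1}^infty h_n^(r-1) * zeta(m, n), where zeta(m, n) = sum_{j=0}^infty 1/(j+n)^m is the Hurwitz zeta function and h_n^(0) = 1/n. -/
open scoped BigOperators

noncomputable def H (n : ℕ) : ℝ := ∑ k ∈ Finset.range n, (1 : ℝ) / (k + 1)

noncomputable def h : ℕ → ℕ → ℝ
  | 0, n => 1 / n
  | r + 1, n => ∑ k ∈ Finset.range n, h r (k + 1)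

noncomputable def zeta (m : ℕ) : ℝ := ∑' n : ℕ, (1 : ℝ) / ((n : ℝ) + 1) ^ m

noncomputable def hzeta (m k : ℕ) : ℝ := ∑' j : ℕ, (1 : ℝ) / ((j : ℝ) + k) ^ m

noncomputable def zetaH (m : ℕ) : ℝ := ∑' n : ℕ, H (n + 1) / ((n : ℝ) + 1) ^ m

def stirling1 : ℕ → ℕ → ℕ
  | 0, 0 => 1
  | 0, _ + 1 => 0
  | _ + 1, 0 => 0
  | n + 1, k + 1 => stirling1 n k + n * stirling1 n (k + 1)

/-!
Since `h_{n}^{(r)} = ∑_{k ≤ n} h_k^{(r-1)}`, the left-hand side is the double series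
`∑_{k ≤ n} h_k^{(r-1)} / n^m`; all its terms are nonnegative, so the order of summation may be
exchanged, and summing over `n ≥ k` first leaves `h_k^{(r-1)} ζ(m, k)`.
-/

open Finset ENNReal

lemma ENNReal.tsum_ite_le_eq_tsum_nat_add (f : ℕ → ℝ≥0∞) (k : ℕ) :
    ∑' n, (if k ≤ n then f n else 0) = ∑' j, f (j + k) := by
  rw [← ENNReal.summable.sum_add_tsum_nat_add' (k := k),
    sum_eq_zero fun i hi => if_neg (by simpa using hi), zero_add]
  exact tsum_congr fun j => if_pos (Nat.le_add_left k j)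

lemma ENNReal.tsum_sum_range_succ_mul (a b : ℕ → ℝ≥0∞) :
    ∑' n, (∑ k ∈ range (n + 1), a k) * b n = ∑' k, a k * ∑' j, b (j + k) := by
  calc ∑' n, (∑ k ∈ range (n + 1), a k) * b n
      = ∑' n, ∑' k, if k ≤ n then a k * b n else 0 := by
        refine tsum_congr fun n => ?_
        rw [sum_mul, tsum_eq_sum (s := range (n + 1)) fun k hk => if_neg (by simpa using hk)]
        exact sum_congr rfl fun k hk => (if_pos (by simpa [Nat.lt_succ_iff] using hk)).symm
    _ = ∑' k, ∑' n, if k ≤ n then a k * b n else 0 := ENNReal.tsum_comm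
    _ = ∑' k, a k * ∑' j, b (j + k) := by
        simp_rw [ENNReal.tsum_ite_le_eq_tsum_nat_add, ENNReal.tsum_mul_left]

lemma Real.tsum_eq_toReal_tsum_ofReal {α : Type*} {f : α → ℝ} (hf : ∀ a, 0 ≤ f a) :
    ∑' a, f a = (∑' a, ENNReal.ofReal (f a)).toReal := by
  rw [ENNReal.tsum_toReal_eq fun a => ofReal_ne_top]
  exact tsum_congr fun a => (toReal_ofReal (hf a)).symm

/-- No convergence of the left-hand side is assumed: if it diverges, so does the right-hand side,
and both are `0`. -/
lemma tsum_sum_range_succ_mul_of_nonneg {a b : ℕ → ℝ} (ha : ∀ k, 0 ≤ a k) (hb : ∀ n, 0 ≤ b n)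
    (hb_sum : Summable b) :
    ∑' n, (∑ k ∈ range (n + 1), a k) * b n = ∑' k, a k * ∑' j, b (j + k) := by
  have hb_tail (k : ℕ) : Summable fun j => b (j + k) := (summable_nat_add_iff k).mpr hb_sum
  rw [Real.tsum_eq_toReal_tsum_ofReal fun n => mul_nonneg (sum_nonneg fun k _ => ha k) (hb n),
    Real.tsum_eq_toReal_tsum_ofReal fun k => mul_nonneg (ha k) (tsum_nonneg fun j => hb _)]
  congr 1
  simp_rw [ENNReal.ofReal_mul (sum_nonneg fun k _ => ha k), ENNReal.ofReal_mul (ha _),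
    ENNReal.ofReal_sum_of_nonneg fun k _ => ha k,
    ENNReal.ofReal_tsum_of_nonneg (fun j => hb _) (hb_tail _)]
  exact ENNReal.tsum_sum_range_succ_mul _ _

lemma summable_one_div_nat_add_one_pow {m : ℕ} (hm : 2 ≤ m) :
    Summable fun n : ℕ => (1 : ℝ) / ((n : ℝ) + 1) ^ m := by
  simpa using (summable_nat_add_iff 1).mpr (Real.summable_one_div_nat_pow.mpr hm)

lemma h_nonneg (r n : ℕ) : 0 ≤ h r n := by
  induction r generalizing n with
  | zero => simp only [h]; positivity
  | succ r ih => exact sum_nonneg fun k _ => ih _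

lemma hzeta_add_one (m k : ℕ) :
    hzeta m (k + 1) = ∑' j : ℕ, 1 / (((j + k : ℕ) : ℝ) + 1) ^ m := by
  unfold hzeta
  congr! 3 with j
  push_cast
  ring

theorem stmt5 (r m : ℕ) (hr : 1 ≤ r) (hm : r + 1 ≤ m) :
    ∑' n : ℕ, h r (n + 1) / ((n : ℝ) + 1) ^ m =
      ∑' n : ℕ, h (r - 1) (n + 1) * hzeta m (n + 1) := by
  obtain ⟨s, rfl⟩ : ∃ s, r = s + 1 := ⟨r - 1, by omega⟩
  simp only [Nat.add_sub_cancel, hzeta_add_one, div_eq_mul_one_div (h (s + 1) _)]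
  exact tsum_sum_range_succ_mul_of_nonneg (fun k => h_nonneg s (k + 1)) (fun n => by positivity)
    (summable_one_div_nat_add_one_pow (by omega))
end

section
/- For positive integers r and n, h_n^(r+1) = (1/r!) * sum_{k=1}^{r+1} [r+1 choose k]_1 * n^{k-1} * (H_{n+r} - H_r), where [.]_1 are unsigned Stirling numbers of the first kind. -/
open scoped BigOperators

/-!
The recurrence `h^(r+1)_(n+1) = h^(r+1)_n + h^(r)_(n+1)` together with Pascal's rule gives, by
induction on `r` and `n`, the closed form `h^(r+1)_n = C(n+r, r) (H_(n+r) - H_r)`. On the other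
side, `∑ₖ [r+1, k] x^(k-1)` is the rising factorial `(x+1)(x+2)⋯(x+r)`, which at `x = n` equals
`r! C(n+r, r)`.
-/

open Finset

lemma H_succ (n : ℕ) : H (n + 1) = H n + 1 / ((n : ℝ) + 1) := by
  simp only [H, sum_range_succ]

lemma h_one (n : ℕ) : h 1 n = H n := by
  simp [h, H]

lemma h_succ_succ (r n : ℕ) : h (r + 1) (n + 1) = h (r + 1) n + h r (n + 1) := by
  simp only [h, sum_range_succ]

theorem h_succ_eq_choose_mul (r n : ℕ) :
    h (r + 1) n = ((n + r).choose r : ℝ) * (H (n + r) - H r) := by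
  induction r generalizing n with
  | zero => simp [h_one, H]
  | succ r ih =>
    induction n with
    | zero => simp [h]
    | succ n ihn =>
      rw [h_succ_succ, ihn, ih]
      set N := n + r + 1
      have hN : n + (r + 1) = N := by omega
      have hN' : n + 1 + r = N := by omega
      have hN'' : n + 1 + (r + 1) = N + 1 := by omega
      have pascal : ((N + 1).choose (r + 1) : ℝ) = N.choose r + N.choose (r + 1) := by
        exact_mod_cast N.choose_succ_succ r
      -- this is what makes the two new harmonic terms 1/(N+1) and 1/(r+1) cancel
      have absorb : ((N : ℝ) + 1) * N.choose r = (N + 1).choose (r + 1) * ((r : ℝ) + 1) := by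
        exact_mod_cast N.add_one_mul_choose_eq r
      rw [hN, hN', hN'', H_succ N, H_succ r, pascal]
      rw [pascal] at absorb
      field_simp
      linear_combination absorb

lemma stirling1_eq_stirlingFirst : stirling1 = Nat.stirlingFirst := by
  funext m k
  induction m generalizing k with
  | zero => cases k <;> rfl
  | succ m ih =>
    cases k with
    | zero => rfl
    | succ k => rw [stirling1, Nat.stirlingFirst_succ_succ, ih, ih, add_comm]

theorem sum_stirling1_succ_succ_mul_pow {R : Type*} [CommSemiring R] (m : ℕ) (x : R) :
    ∑ k ∈ range (m + 1), (stirling1 (m + 1) (k + 1) : R) * x ^ k =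
      ∏ i ∈ range m, (x + 1 + i) := by
  rw [stirling1_eq_stirlingFirst]
  induction m with
  | zero => simp [Nat.stirlingFirst_self]
  | succ m ih =>
    have hsplit : ∀ k, (Nat.stirlingFirst (m + 2) (k + 1) : R) * x ^ k =
        (m + 1) * ((Nat.stirlingFirst (m + 1) (k + 1) : R) * x ^ k) +
          (Nat.stirlingFirst (m + 1) k : R) * x ^ k := by
      intro k
      rw [Nat.stirlingFirst_succ_succ]
      push_cast
      ring
    have htop : (Nat.stirlingFirst (m + 1) (m + 2) : R) = 0 := by
      rw [Nat.stirlingFirst_eq_zero_of_lt (by omega), Nat.cast_zero]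
    have hshift : ∑ k ∈ range (m + 2), (Nat.stirlingFirst (m + 1) k : R) * x ^ k =
        x * ∑ k ∈ range (m + 1), (Nat.stirlingFirst (m + 1) (k + 1) : R) * x ^ k := by
      rw [sum_range_succ', mul_sum]
      simp only [Nat.stirlingFirst_succ_zero, Nat.cast_zero, zero_mul, add_zero, pow_succ]
      exact sum_congr rfl fun k _ => by ring
    rw [sum_congr rfl fun k _ => hsplit k, sum_add_distrib, ← mul_sum, sum_range_succ _ (m + 1),
      htop, zero_mul, add_zero, hshift, ih, prod_range_succ]
    ring

lemma sum_Icc_stirling1_mul_pow_pred (r n : ℕ) :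
    ∑ k ∈ Icc 1 (r + 1), (stirling1 (r + 1) k : ℝ) * (n : ℝ) ^ (k - 1) =
      r.factorial * (n + r).choose r := by
  rw [← Ico_add_one_right_eq_Icc, ← sum_Ico_add' _ 0 (r + 1) 1, ← range_eq_Ico]
  simp only [Nat.add_sub_cancel]
  rw [sum_stirling1_succ_succ_mul_pow]
  exact_mod_cast ((n + 1).ascFactorial_eq_prod_range r).symm.trans
    (Nat.ascFactorial_eq_factorial_mul_choose n r)

theorem stmt9_general (r n : ℕ) :
    h (r + 1) n =
      (1 / (r.factorial : ℝ)) *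
        ∑ k ∈ Finset.Icc 1 (r + 1),
          (stirling1 (r + 1) k : ℝ) * (n : ℝ) ^ (k - 1) * (H (n + r) - H r) := by
  rw [← Finset.sum_mul, sum_Icc_stirling1_mul_pow_pred, h_succ_eq_choose_mul]
  have : (r.factorial : ℝ) ≠ 0 := by positivity
  field_simp

theorem stmt9 (r n : ℕ) (hr : 1 ≤ r) (hn : 1 ≤ n) :
    h (r + 1) n =
      (1 / (r.factorial : ℝ)) *
        ∑ k ∈ Finset.Icc 1 (r + 1),
          (stirling1 (r + 1) k : ℝ) * (n : ℝ) ^ (k - 1) * (H (n + r) - H r) :=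
  stmt9_general r n
end

section
/- For every positive integer n, sum_{m=1}^infty (-1)^{m+1} * 2n / ((m+1)(m+2n+1)) * H_m = 2*ln(2) * sum_{k=0}^{n-1} 1/(2k+1) - sum_{j=1}^{2n} (1/j) * sum_{k=1}^j (-1)^{k-1}/k. -/
open scoped BigOperators

/-!
With `a_k = (-1)^k / (k + 1)`, whose series sums to `log 2`, the `m`-th summand is
`(a_{m+1+2n} - a_{m+1}) H_{m+1}`, a difference of consecutive window sums
`W_m = a_{m+1} + ⋯ + a_{m+2n}`. Abel summation turns the `N`-th partial sum into
`W_N H_N - ∑_{r<2n} ∑_{m<N} a_{m+1+r} / (m + 1)`. The boundary term is `O(N^{-1/2})` since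
`H_N ≤ 2√N`, and by partial fractions each inner series telescopes to a combination of `log 2`
and the partial sum `a_0 + ⋯ + a_r`; the even `r` contribute the `log 2` terms.
-/

open Filter Topology Finset

lemma sum_range_sub_mul_eq {R : Type*} [CommRing R] (D G : ℕ → R) (N : ℕ) :
    ∑ m ∈ range N, (D (m + 1) - D m) * G (m + 1) =
      D N * G N - D 0 * G 0 - ∑ m ∈ range N, D m * (G (m + 1) - G m) := by
  induction N with
  | zero => simp
  | succ N ih => rw [sum_range_succ, sum_range_succ, ih]; ring

lemma sum_Icc_one_eq_sum_range {M : Type*} [AddCommMonoid M] (f : ℕ → M) (N : ℕ) :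
    ∑ k ∈ Icc 1 N, f k = ∑ k ∈ range N, f (k + 1) := by
  rw [← Ico_add_one_right_eq_Icc, sum_Ico_eq_sum_range]
  simp [add_comm]

noncomputable def altTerm (k : ℕ) : ℝ := (-1) ^ k / (k + 1)

noncomputable def altHarmonic (N : ℕ) : ℝ := ∑ k ∈ range N, altTerm k

lemma altHarmonic_two_mul (N : ℕ) :
    altHarmonic (2 * N) = harmonic (2 * N) - harmonic N := by
  induction N with
  | zero => simp [altHarmonic]
  | succ N ih =>
    rw [show 2 * (N + 1) = 2 * N + 1 + 1 by ring, altHarmonic, sum_range_succ, sum_range_succ,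
      ← altHarmonic, ih, harmonic_succ, harmonic_succ, harmonic_succ, altTerm, altTerm,
      pow_succ, pow_mul]
    push_cast
    field_simp
    ring

lemma tendsto_altHarmonic : Tendsto altHarmonic atTop (𝓝 (Real.log 2)) := by
  obtain ⟨l, hleibniz⟩ := Antitone.tendsto_alternating_series_of_tendsto_zero
    (f := fun k : ℕ => 1 / ((k : ℝ) + 1))
    (fun a b hab => by dsimp only; gcongr) tendsto_one_div_add_atTop_nhds_zero_nat
  have hl : Tendsto altHarmonic atTop (𝓝 l) :=
    hleibniz.congr fun N => sum_congr rfl fun k _ => by rw [altTerm]; ring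
  have h2 : Tendsto (fun N : ℕ => 2 * N) atTop atTop :=
    tendsto_id.const_mul_atTop' two_pos
  -- `H_{2N} - H_N = (H_{2N} - log 2N) - (H_N - log N) + log 2`, and both brackets tend to `γ`.
  have heven : Tendsto (fun N => altHarmonic (2 * N)) atTop (𝓝 (Real.log 2)) := by
    have hγ := Real.tendsto_harmonic_sub_log
    have := ((hγ.comp h2).sub hγ).add_const (Real.log 2)
    rw [sub_self, zero_add] at this
    refine this.congr' ?_
    filter_upwards [eventually_ne_atTop 0] with N hN
    simp only [Function.comp_apply, altHarmonic_two_mul, Nat.cast_mul, Nat.cast_ofNat,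
      Real.log_mul two_ne_zero (Nat.cast_ne_zero.2 hN)]
    ring
  rwa [tendsto_nhds_unique (hl.comp h2) heven] at hl

lemma H_eq_harmonic (n : ℕ) : H n = harmonic n := by
  simp [H, harmonic]

lemma H_le_two_mul_sqrt (n : ℕ) : H n ≤ 2 * √n := by
  rcases Nat.eq_zero_or_pos n with rfl | hn
  · simp [H]
  have hn : (0 : ℝ) < n := Nat.cast_pos.2 hn
  linarith [H_eq_harmonic n ▸ harmonic_le_one_add_log n, Real.log_sqrt hn.le,
    Real.log_le_sub_one_of_pos (Real.sqrt_pos.2 hn)]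

lemma H_nonneg (n : ℕ) : 0 ≤ H n := sum_nonneg fun _ _ => by positivity

lemma summable_H_succ_div_sq : Summable fun m : ℕ => H (m + 1) / ((m : ℝ) + 1) ^ 2 := by
  have hp : Summable fun m : ℕ => ((m : ℝ) + 1) ^ (-(3 / 2) : ℝ) := by
    have := (summable_nat_add_iff 1).2 (Real.summable_nat_rpow.2 (by norm_num : -(3 / 2 : ℝ) < -1))
    simpa only [Nat.cast_add, Nat.cast_one] using this
  refine Summable.of_nonneg_of_le (fun m => div_nonneg (H_nonneg _) (by positivity))
    (fun m => ?_) (hp.mul_left 2)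
  have hx : (0 : ℝ) < (m : ℝ) + 1 := by positivity
  have hsqrt : √((m : ℝ) + 1) / ((m : ℝ) + 1) ^ 2 = ((m : ℝ) + 1) ^ (-(3 / 2) : ℝ) := by
    rw [Real.sqrt_eq_rpow, ← Real.rpow_natCast _ 2, ← Real.rpow_sub hx]
    norm_num
  calc H (m + 1) / ((m : ℝ) + 1) ^ 2 ≤ 2 * √((m : ℝ) + 1) / ((m : ℝ) + 1) ^ 2 := by
        gcongr
        exact_mod_cast H_le_two_mul_sqrt (m + 1)
    _ = 2 * ((m : ℝ) + 1) ^ (-(3 / 2) : ℝ) := by rw [mul_div_assoc, hsqrt]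

noncomputable def altWindow (k m : ℕ) : ℝ := ∑ r ∈ range k, altTerm (m + 1 + r)

lemma altWindow_succ_sub (k m : ℕ) :
    altWindow k (m + 1) - altWindow k m = altTerm (m + 1 + k) - altTerm (m + 1) := by
  induction k with
  | zero => simp [altWindow]
  | succ k ih =>
    simp only [altWindow, sum_range_succ] at ih ⊢
    rw [show m + 1 + 1 + k = m + 1 + (k + 1) by ring]
    linarith

lemma abs_altWindow_le (k N : ℕ) : |altWindow k N| ≤ k / ((N : ℝ) + 1) := by
  calc |altWindow k N| ≤ ∑ r ∈ range k, |altTerm (N + 1 + r)| := abs_sum_le_sum_abs _ _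
    _ ≤ ∑ r ∈ range k, 1 / ((N : ℝ) + 1) := sum_le_sum fun r _ => by
        rw [altTerm, abs_div, abs_pow, abs_neg, abs_one, one_pow, abs_of_pos (by positivity)]
        gcongr
        linarith
    _ = k / ((N : ℝ) + 1) := by simp [div_eq_mul_inv]

lemma tendsto_altWindow_mul_H (k : ℕ) :
    Tendsto (fun N => altWindow k N * H N) atTop (𝓝 0) := by
  have hsqrt : Tendsto (fun N : ℕ => 2 * k * (√((N : ℝ) + 1))⁻¹) atTop (𝓝 0) := by
    simpa using (tendsto_inv_atTop_zero.comp (Real.tendsto_sqrt_atTop.comp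
      (tendsto_natCast_atTop_atTop.atTop_add tendsto_const_nhds))).const_mul (2 * k : ℝ)
  refine squeeze_zero_norm (fun N => ?_) hsqrt
  have hx : (0 : ℝ) < (N : ℝ) + 1 := by positivity
  calc ‖altWindow k N * H N‖ = |altWindow k N| * H N := by
        rw [Real.norm_eq_abs, abs_mul, abs_of_nonneg (H_nonneg N)]
    _ ≤ k / ((N : ℝ) + 1) * (2 * √((N : ℝ) + 1)) :=
        mul_le_mul (abs_altWindow_le k N)
          ((H_le_two_mul_sqrt N).trans (by gcongr; linarith)) (H_nonneg N) (by positivity)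
    _ = 2 * k * (√((N : ℝ) + 1) / ((N : ℝ) + 1)) := by ring
    _ = 2 * k * (√((N : ℝ) + 1))⁻¹ := by rw [Real.sqrt_div_self]

lemma altTerm_succ_add_div (m r : ℕ) :
    altTerm (m + 1 + r) / ((m : ℝ) + 1) =
      (-1) ^ (r + 1) / ((r : ℝ) + 1) * altTerm m - altTerm (r + 1 + m) / ((r : ℝ) + 1) := by
  simp only [altTerm, show r + 1 + m = m + (r + 1) by ring, pow_add]
  push_cast
  field_simp
  ring

lemma sum_range_altTerm_succ_add_div (N r : ℕ) :
    ∑ m ∈ range N, altTerm (m + 1 + r) / ((m : ℝ) + 1) =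
      (-1) ^ (r + 1) / ((r : ℝ) + 1) * altHarmonic N -
        (altHarmonic (r + 1 + N) - altHarmonic (r + 1)) / ((r : ℝ) + 1) := by
  rw [sum_congr rfl fun m _ => altTerm_succ_add_div m r]
  simp only [sum_sub_distrib, ← mul_sum, ← sum_div, altHarmonic,
    sum_range_add, add_sub_cancel_left]

lemma tendsto_sum_range_altTerm_succ_add_div (r : ℕ) :
    Tendsto (fun N => ∑ m ∈ range N, altTerm (m + 1 + r) / ((m : ℝ) + 1)) atTop
      (𝓝 ((-1) ^ (r + 1) / ((r : ℝ) + 1) * Real.log 2 -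
        (Real.log 2 - altHarmonic (r + 1)) / ((r : ℝ) + 1))) := by
  simp only [sum_range_altTerm_succ_add_div]
  have hshift := tendsto_altHarmonic.comp (tendsto_add_atTop_nat (r + 1))
  simp only [Function.comp_def, add_comm _ (r + 1)] at hshift
  exact (tendsto_altHarmonic.const_mul _).sub ((hshift.sub_const _).div_const _)

lemma altTerm_succ_add_two_mul_sub (m n : ℕ) :
    altTerm (m + 1 + 2 * n) - altTerm (m + 1) =
      (-1) ^ (m + 2) * (2 * n) / (((m : ℝ) + 2) * ((m : ℝ) + 1 + 2 * n + 1)) := by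
  simp only [altTerm, pow_add, pow_mul]
  push_cast
  field_simp
  ring

lemma sum_range_two_mul_one_add_neg_one_pow_div (n : ℕ) :
    ∑ r ∈ range (2 * n), (1 + (-1) ^ r) / ((r : ℝ) + 1) =
      2 * ∑ k ∈ range n, (1 : ℝ) / (2 * k + 1) := by
  induction n with
  | zero => simp
  | succ n ih =>
    rw [show 2 * (n + 1) = 2 * n + 1 + 1 by ring, sum_range_succ, sum_range_succ, ih,
      sum_range_succ, pow_succ, pow_mul]
    push_cast
    ring

lemma sum_Icc_neg_one_pow_div (j : ℕ) :
    ∑ k ∈ Icc 1 j, (-1 : ℝ) ^ (k - 1) / k = altHarmonic j := by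
  simp [sum_Icc_one_eq_sum_range, altHarmonic, altTerm]

lemma sum_range_altWindow_sub_mul_H (k N : ℕ) :
    ∑ m ∈ range N, (altWindow k (m + 1) - altWindow k m) * H (m + 1) =
      altWindow k N * H N -
        ∑ r ∈ range k, ∑ m ∈ range N, altTerm (m + 1 + r) / ((m : ℝ) + 1) := by
  have hH : ∀ m : ℕ, H (m + 1) - H m = 1 / ((m : ℝ) + 1) := fun m => by
    simp [H, sum_range_succ]
  have H_zero : H 0 = 0 := by simp [H]
  rw [sum_range_sub_mul_eq, H_zero, mul_zero, sub_zero, sum_comm]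
  simp only [hH, altWindow, sum_mul, mul_one_div, sum_div]

theorem stmt19_general (n : ℕ) :
    ∑' m : ℕ, (-1 : ℝ) ^ (m + 2) * (2 * n) /
        (((m : ℝ) + 2) * ((m : ℝ) + 1 + 2 * n + 1)) * H (m + 1) =
      2 * Real.log 2 * ∑ k ∈ Finset.range n, (1 : ℝ) / (2 * k + 1) -
        ∑ j ∈ Finset.Icc 1 (2 * n),
          (1 / (j : ℝ)) * ∑ k ∈ Finset.Icc 1 j, (-1 : ℝ) ^ (k - 1) / k := by
  have hsum : Summable fun m : ℕ => (-1 : ℝ) ^ (m + 2) * (2 * n) /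
      (((m : ℝ) + 2) * ((m : ℝ) + 1 + 2 * n + 1)) * H (m + 1) := by
    refine (summable_H_succ_div_sq.mul_left (2 * n : ℝ)).of_norm_bounded fun m => ?_
    rw [Real.norm_eq_abs, abs_mul, abs_div, abs_mul, abs_pow, abs_neg, abs_one, one_pow, one_mul,
      abs_of_nonneg (H_nonneg _), abs_of_nonneg (by positivity), abs_of_nonneg (by positivity),
      mul_div_assoc', div_mul_eq_mul_div]
    exact div_le_div_of_nonneg_left (mul_nonneg (by positivity) (H_nonneg _)) (by positivity)
      (by nlinarith)
  refine (hsum.hasSum_iff_tendsto_nat.2 ?_).tsum_eq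
  simp only [← altTerm_succ_add_two_mul_sub, ← altWindow_succ_sub, sum_range_altWindow_sub_mul_H]
  convert (tendsto_altWindow_mul_H (2 * n)).sub
    (tendsto_finsetSum _ fun r _ => tendsto_sum_range_altTerm_succ_add_div r) using 2
  rw [zero_sub, mul_comm 2 (Real.log 2), mul_assoc, ← sum_range_two_mul_one_add_neg_one_pow_div,
    sum_Icc_one_eq_sum_range, mul_sum, ← sum_sub_distrib, ← sum_neg_distrib]
  refine sum_congr rfl fun r _ => ?_
  rw [sum_Icc_neg_one_pow_div]
  push_cast
  ring

theorem stmt19 (n : ℕ) (hn : 1 ≤ n) :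
    ∑' m : ℕ, (-1 : ℝ) ^ (m + 2) * (2 * n) /
        (((m : ℝ) + 2) * ((m : ℝ) + 1 + 2 * n + 1)) * H (m + 1) =
      2 * Real.log 2 * ∑ k ∈ Finset.range n, (1 : ℝ) / (2 * k + 1) -
        ∑ j ∈ Finset.Icc 1 (2 * n),
          (1 / (j : ℝ)) * ∑ k ∈ Finset.Icc 1 j, (-1 : ℝ) ^ (k - 1) / k :=
  stmt19_general n
end
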